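/- (Lifted Local Complementation) Let G be a finite simple graph with a foliage partition F_W of its vertex set (a partition each of whose blocks consists of pairwise foliage-equivalent vertices of G). Let a be a vertex of G with degree greater than 1, lying in block W_a. Then the foliage graph of the locally complemented graph equals the local complement of the foliage graph at W_a: F_W(τ_a(G)) = τ_{W_a}(F_W(G)), where both foliage graphs are taken with respect to the same partition F_W. -/

import Mathlib

variable {V : Type*}

/-- Local complementation `τ_a(G)`: toggle every edge between distinct neighbors of `a`. -/
def lcomp (G : SimpleGraph V) (a : V) : SimpleGraph V where
  Adj x y := (G.Adj x y ∧ ¬(x ≠ y ∧ G.Adj a x ∧ G.Adj a y)) ∨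
             ((x ≠ y ∧ G.Adj a x ∧ G.Adj a y) ∧ ¬ G.Adj x y)
  symm := by
    constructor
    rintro x y (⟨h1, h2⟩ | ⟨⟨hne, hx, hy⟩, h2⟩)
    · exact Or.inl ⟨h1.symm, fun h => h2 ⟨h.1.symm, h.2.2, h.2.1⟩⟩
    · exact Or.inr ⟨⟨hne.symm, hy, hx⟩, fun h => h2 h.symm⟩
  loopless := by
    constructor
    rintro x (⟨h1, _⟩ | ⟨⟨hne, _, _⟩, _⟩)
    · exact G.irrefl h1
    · exact hne rfl

/-- `(l, a)` is a leaf-axil pair: `l` has degree 1 and its unique neighbor is `a`. -/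
def IsLeafAxil (G : SimpleGraph V) (l a : V) : Prop :=
  G.Adj l a ∧ ∀ x, G.Adj l x → x = a

/-- `v` and `w` are twins: `N_v \ {w} = N_w \ {v} ≠ ∅`. -/
def IsTwin (G : SimpleGraph V) (v w : V) : Prop :=
  v ≠ w ∧ G.neighborSet v \ {w} = G.neighborSet w \ {v} ∧
    (G.neighborSet v \ {w}).Nonempty

/-- Foliage equivalence `v ∼_F w`. -/
def FoliageEq (G : SimpleGraph V) (v w : V) : Prop :=
  v = w ∨ IsLeafAxil G v w ∨ IsLeafAxil G w v ∨ IsTwin G v w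

/-- The foliage graph of `G` with respect to a partition `P` of the vertex set:
vertices are the blocks, with distinct blocks adjacent iff some vertex of one is
adjacent in `G` to some vertex of the other. -/
def foliageGraph (G : SimpleGraph V) (P : Set (Set V)) : SimpleGraph {A : Set V // A ∈ P} where
  Adj A B := A ≠ B ∧ ∃ a ∈ A.1, ∃ b ∈ B.1, G.Adj a b
  symm := by
    constructor
    rintro A B ⟨hne, a, ha, b, hb, hab⟩
    exact ⟨hne.symm, b, hb, a, ha, hab.symm⟩
  loopless := ⟨fun A h => h.1 rfl⟩

/-!
Inside a foliage block, all vertices that have a neighbour outside the block have the same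
outside neighbourhood; the other vertices are leaves hanging inside the block. Since `a` is
not a leaf, a block `A ≠ W_a` is adjacent to `W_a` exactly when it meets `N(a)`, and this stays
true after complementing at `a`, which does not change `N(a)`. For two blocks `A, B ≠ W_a`
meeting `N(a)`, any edge between them forces the edges between `A` and `B` to be precisely the
pairs of neighbours of `a`; so local complementation deletes all of them, and if there is no such
edge it creates one. Thus block adjacency is toggled exactly between blocks adjacent to `W_a`.
-/

variable {G : SimpleGraph V}

theorem FoliageEq.adj_of_adj {x y z z' : V} (h : FoliageEq G x y) (hxz : G.Adj x z)
    (hyz' : G.Adj y z') (hzy : z ≠ y) (hz'x : z' ≠ x) : G.Adj x z' := by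
  rcases h with rfl | ⟨-, hx⟩ | ⟨-, hy⟩ | ⟨-, hN, -⟩
  · exact hyz'
  · exact absurd (hx z hxz) hzy
  · exact absurd (hy z' hyz') hz'x
  · have hz' : z' ∈ G.neighborSet y \ {x} := ⟨hyz', hz'x⟩
    rw [← hN] at hz'
    exact hz'.1

theorem adj_of_adj_of_notMem {A : Set V} (hA : ∀ v ∈ A, ∀ w ∈ A, FoliageEq G v w)
    {x y z z' : V} (hx : x ∈ A) (hy : y ∈ A) (hz : z ∉ A) (hz' : z' ∉ A)
    (hxz : G.Adj x z) (hyz' : G.Adj y z') : G.Adj x z' :=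
  (hA x hx y hy).adj_of_adj hxz hyz' (fun h => hz (h ▸ hy)) (fun h => hz' (h ▸ hx))

section lcomp

variable {a x y : V}

theorem lcomp_adj : (lcomp G a).Adj x y ↔ Xor (G.Adj x y) (x ≠ y ∧ G.Adj a x ∧ G.Adj a y) :=
  Iff.rfl

theorem lcomp_adj_of_not_and (h : ¬(G.Adj a x ∧ G.Adj a y)) :
    (lcomp G a).Adj x y ↔ G.Adj x y := by
  simp [lcomp_adj, xor_def, h]

theorem lcomp_adj_iff_not_adj (hxy : x ≠ y) (hx : G.Adj a x) (hy : G.Adj a y) :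
    (lcomp G a).Adj x y ↔ ¬G.Adj x y := by
  simp [lcomp_adj, xor_def, hxy, hx, hy]

theorem lcomp_self_adj : (lcomp G a).Adj a y ↔ G.Adj a y :=
  lcomp_adj_of_not_and fun h => G.irrefl h.1

end lcomp

def BlockAdj (G : SimpleGraph V) (A B : Set V) : Prop :=
  ∃ x ∈ A, ∃ y ∈ B, G.Adj x y

theorem foliageGraph_adj {P : Set (Set V)} {A B : {A : Set V // A ∈ P}} :
    (foliageGraph G P).Adj A B ↔ A ≠ B ∧ BlockAdj G A B :=
  Iff.rfl

theorem blockAdj_comm {A B : Set V} : BlockAdj G A B ↔ BlockAdj G B A :=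
  ⟨fun ⟨x, hx, y, hy, h⟩ => ⟨y, hy, x, hx, h.symm⟩,
    fun ⟨y, hy, x, hx, h⟩ => ⟨x, hx, y, hy, h.symm⟩⟩

section blocks

variable {A B : Set V} {a : V}

theorem blockAdj_iff_of_mem (hA : ∀ v ∈ A, ∀ w ∈ A, FoliageEq G v w) (ha : a ∈ A)
    (hdeg : 1 < (G.neighborSet a).ncard) (hAB : Disjoint A B) :
    BlockAdj G A B ↔ ∃ y ∈ B, G.Adj a y := by
  constructor
  · rintro ⟨w, hw, y, hy, hwy⟩
    obtain ⟨z, haz, hzw⟩ := Set.exists_ne_of_one_lt_ncard hdeg w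
    exact ⟨y, hy, (hA a ha w hw).adj_of_adj haz hwy hzw (hAB.ne_of_mem ha hy).symm⟩
  · rintro ⟨y, hy, hay⟩
    exact ⟨a, ha, y, hy, hay⟩

theorem blockAdj_lcomp_iff_of_mem (hA : ∀ v ∈ A, ∀ w ∈ A, FoliageEq G v w) (ha : a ∈ A)
    (hdeg : 1 < (G.neighborSet a).ncard) (hAB : Disjoint A B) :
    BlockAdj (lcomp G a) A B ↔ BlockAdj G A B := by
  constructor
  · rintro ⟨x, hx, y, hy, hxy⟩
    by_cases hay : G.Adj a y
    · exact ⟨a, ha, y, hy, hay⟩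
    · exact ⟨x, hx, y, hy, (lcomp_adj_of_not_and fun h => hay h.2).1 hxy⟩
  · intro hE
    obtain ⟨y, hy, hay⟩ := (blockAdj_iff_of_mem hA ha hdeg hAB).1 hE
    exact ⟨a, ha, y, hy, lcomp_self_adj.2 hay⟩

theorem adj_iff_of_blockAdj (hA : ∀ v ∈ A, ∀ w ∈ A, FoliageEq G v w)
    (hB : ∀ v ∈ B, ∀ w ∈ B, FoliageEq G v w) (hAB : Disjoint A B) (haA : a ∉ A) (haB : a ∉ B)
    (hE : BlockAdj G A B) {x₀ y₀ : V} (hx₀ : x₀ ∈ A) (hax₀ : G.Adj a x₀) (hy₀ : y₀ ∈ B)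
    (hay₀ : G.Adj a y₀) {x y : V} (hx : x ∈ A) (hy : y ∈ B) :
    G.Adj x y ↔ G.Adj a x ∧ G.Adj a y := by
  have hyA : y ∉ A := hAB.notMem_of_mem_right hy
  have hxB : x ∉ B := hAB.notMem_of_mem_left hx
  constructor
  · intro hxy
    exact ⟨(adj_of_adj_of_notMem hA hx hx₀ hyA haA hxy hax₀.symm).symm,
      (adj_of_adj_of_notMem hB hy hy₀ hxB haB hxy.symm hay₀.symm).symm⟩
  · rintro ⟨hax, hay⟩
    obtain ⟨x₁, hx₁, y₁, hy₁, h₁⟩ := hE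
    have hxy₁ := adj_of_adj_of_notMem hA hx hx₁ haA (hAB.notMem_of_mem_right hy₁) hax.symm h₁
    exact (adj_of_adj_of_notMem hB hy hy₁ haB hxB hay.symm hxy₁.symm).symm

theorem blockAdj_lcomp_iff (hA : ∀ v ∈ A, ∀ w ∈ A, FoliageEq G v w)
    (hB : ∀ v ∈ B, ∀ w ∈ B, FoliageEq G v w) (hAB : Disjoint A B) (haA : a ∉ A) (haB : a ∉ B) :
    BlockAdj (lcomp G a) A B ↔
      Xor (BlockAdj G A B) ((∃ x ∈ A, G.Adj a x) ∧ ∃ y ∈ B, G.Adj a y) := by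
  by_cases hN : (∃ x ∈ A, G.Adj a x) ∧ ∃ y ∈ B, G.Adj a y
  · simp only [hN, and_self, xor_comm _ True, xor_true]
    obtain ⟨⟨x₀, hx₀, hax₀⟩, y₀, hy₀, hay₀⟩ := hN
    constructor
    · rintro ⟨x, hx, y, hy, hxy⟩ hE
      have hcross := adj_iff_of_blockAdj hA hB hAB haA haB hE hx₀ hax₀ hy₀ hay₀ hx hy
      by_cases hboth : G.Adj a x ∧ G.Adj a y
      · exact (lcomp_adj_iff_not_adj (hAB.ne_of_mem hx hy) hboth.1 hboth.2).1 hxy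
          (hcross.2 hboth)
      · exact hboth (hcross.1 ((lcomp_adj_of_not_and hboth).1 hxy))
    · intro hE
      exact ⟨x₀, hx₀, y₀, hy₀, (lcomp_adj_iff_not_adj (hAB.ne_of_mem hx₀ hy₀) hax₀ hay₀).2
        fun h => hE ⟨x₀, hx₀, y₀, hy₀, h⟩⟩
  · simp only [hN, xor_comm _ False, xor_false, id]
    unfold BlockAdj
    exact exists_congr fun x => and_congr_right fun hx => exists_congr fun y =>
      and_congr_right fun hy => lcomp_adj_of_not_and fun h => hN ⟨⟨x, hx, h.1⟩, y, hy, h.2⟩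

end blocks

theorem blockAdj_lcomp_iff_of_isPartition {P : Set (Set V)} (hpart : Setoid.IsPartition P)
    (hfol : ∀ A ∈ P, ∀ v ∈ A, ∀ w ∈ A, FoliageEq G v w) {a : V}
    (hdeg : 1 < (G.neighborSet a).ncard) {Wa A B : Set V} (hWa : Wa ∈ P) (haWa : a ∈ Wa)
    (hA : A ∈ P) (hB : B ∈ P) (hAB : A ≠ B) :
    BlockAdj (lcomp G a) A B ↔
      Xor (BlockAdj G A B) ((Wa ≠ A ∧ BlockAdj G Wa A) ∧ (Wa ≠ B ∧ BlockAdj G Wa B)) := by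
  have hdisj : ∀ {C D : Set V}, C ∈ P → D ∈ P → C ≠ D → Disjoint C D :=
    fun hC hD h => hpart.pairwiseDisjoint hC hD h
  by_cases hAWa : A = Wa
  · subst hAWa
    simp only [ne_eq, not_true_eq_false, false_and, xor_comm _ False, xor_false, id]
    exact blockAdj_lcomp_iff_of_mem (hfol A hA) haWa hdeg (hdisj hA hB hAB)
  by_cases hBWa : B = Wa
  · subst hBWa
    simp only [ne_eq, not_true_eq_false, false_and, and_false, xor_comm _ False, xor_false, id]
    rw [blockAdj_comm, @blockAdj_comm _ G]
    exact blockAdj_lcomp_iff_of_mem (hfol B hB) haWa hdeg (hdisj hB hA (Ne.symm hAB))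
  have hWaA := hdisj hWa hA (Ne.symm hAWa)
  have hWaB := hdisj hWa hB (Ne.symm hBWa)
  simp only [Ne.symm hAWa, Ne.symm hBWa, ne_eq, not_false_eq_true, true_and,
    blockAdj_iff_of_mem (hfol Wa hWa) haWa hdeg hWaA,
    blockAdj_iff_of_mem (hfol Wa hWa) haWa hdeg hWaB]
  exact blockAdj_lcomp_iff (hfol A hA) (hfol B hB) (hdisj hA hB hAB)
    (hWaA.notMem_of_mem_left haWa) (hWaB.notMem_of_mem_left haWa)

theorem lifted_local_complementation_general {V : Type*} (G : SimpleGraph V)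
    (P : Set (Set V)) (hpart : Setoid.IsPartition P)
    (hfol : ∀ A ∈ P, ∀ v ∈ A, ∀ w ∈ A, FoliageEq G v w)
    (a : V) (hdeg : 1 < (G.neighborSet a).ncard)
    (Wa : Set V) (hWa : Wa ∈ P) (haWa : a ∈ Wa) :
    foliageGraph (lcomp G a) P = lcomp (foliageGraph G P) ⟨Wa, hWa⟩ := by
  ext ⟨A, hA⟩ ⟨B, hB⟩
  simp only [foliageGraph_adj, lcomp_adj, ne_eq, Subtype.mk.injEq]
  by_cases hAB : A = B
  · simp [hAB]
  · simp only [hAB, not_false_eq_true, true_and]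
    exact blockAdj_lcomp_iff_of_isPartition hpart hfol hdeg hWa haWa hA hB hAB

/-- Lifted Local Complementation. -/
theorem lifted_local_complementation {V : Type*} [Fintype V] (G : SimpleGraph V)
    (P : Set (Set V)) (hpart : Setoid.IsPartition P)
    (hfol : ∀ A ∈ P, ∀ v ∈ A, ∀ w ∈ A, FoliageEq G v w)
    (a : V) (hdeg : 1 < (G.neighborSet a).ncard)
    (Wa : Set V) (hWa : Wa ∈ P) (haWa : a ∈ Wa) :
    foliageGraph (lcomp G a) P = lcomp (foliageGraph G P) ⟨Wa, hWa⟩ :=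
  lifted_local_complementation_general G P hpart hfol a hdeg Wa hWa haWa
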